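/- Let A be a real d×d matrix with tr(A) > 0 satisfying the Cordes condition |A|² / (tr A)² ≤ 1/(d-1+ε) for some 0 < ε ≤ 1, where |A| denotes the Frobenius norm. Define γ = tr(A)/|A|². Then for every real d×d matrix B, |γ (A:B) − tr(B)| ≤ √(1−ε) |B|, where A:B denotes the Frobenius inner product and |B| the Frobenius norm. -/
import Mathlib


open Matrix

/-- Frobenius inner product of two real square matrices. -/
noncomputable def frob {d : ℕ} (A B : Matrix (Fin d) (Fin d) ℝ) : ℝ :=
  ∑ i, ∑ j, A i j * B i j

lemma frob_self_nonneg {d : ℕ} (A : Matrix (Fin d) (Fin d) ℝ) : 0 ≤ frob A A := by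
  rw [frob]
  exact Finset.sum_nonneg fun i _ => Finset.sum_nonneg fun j _ => mul_self_nonneg _

lemma frob_cs {d : ℕ} (A B : Matrix (Fin d) (Fin d) ℝ) :
    |frob A B| ≤ Real.sqrt (frob A A) * Real.sqrt (frob B B) := by
  have h := Finset.sum_mul_sq_le_sq_mul_sq Finset.univ
    (fun p : Fin d × Fin d => A p.1 p.2) (fun p : Fin d × Fin d => B p.1 p.2)
  have e1 : ∀ C D : Matrix (Fin d) (Fin d) ℝ,
      frob C D = ∑ p : Fin d × Fin d, C p.1 p.2 * D p.1 p.2 := by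
    intro C D
    rw [frob]
    exact (Fintype.sum_prod_type (f := fun p : Fin d × Fin d => C p.1 p.2 * D p.1 p.2)).symm
  rw [← Real.sqrt_sq_eq_abs, ← Real.sqrt_mul (frob_self_nonneg A)]
  apply Real.sqrt_le_sqrt
  rw [e1, e1, e1]
  simpa [pow_two, mul_pow] using h

/-- The Cordes-condition inequality: if `A` has positive trace and satisfies the
Cordes condition with parameter `ε ∈ (0,1]`, then with `γ = tr A / |A|²` one has
`|γ (A:B) − tr B| ≤ √(1−ε) |B|` for all matrices `B`. -/
theorem stmt0 {d : ℕ} (A : Matrix (Fin d) (Fin d) ℝ) (ε : ℝ)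
    (hε0 : 0 < ε) (hε1 : ε ≤ 1) (htr : 0 < Matrix.trace A)
    (hCordes : frob A A / (Matrix.trace A) ^ 2 ≤ 1 / ((d : ℝ) - 1 + ε)) :
    ∀ B : Matrix (Fin d) (Fin d) ℝ,
      |Matrix.trace A / frob A A * frob A B - Matrix.trace B|
        ≤ Real.sqrt (1 - ε) * Real.sqrt (frob B B) := by
  intro B
  -- d ≥ 1
  have hd : 0 < d := by
    rcases Nat.eq_zero_or_pos d with h | h
    · subst h
      simp [Matrix.trace] at htr
    · exact h
  -- frob A A > 0
  have hAA : 0 < frob A A := by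
    rcases lt_or_eq_of_le (frob_self_nonneg A) with h | h
    · exact h
    · exfalso
      have h' := h.symm
      rw [frob] at h'
      have hz : ∀ i j, A i j = 0 := by
        intro i j
        have hi := (Finset.sum_eq_zero_iff_of_nonneg
          (fun i _ => Finset.sum_nonneg fun j _ => mul_self_nonneg (A i j))).mp h' i
          (Finset.mem_univ _)
        have hj := (Finset.sum_eq_zero_iff_of_nonneg
          (fun j _ => mul_self_nonneg (A i j))).mp hi j (Finset.mem_univ _)
        exact mul_self_eq_zero.mp hj
      have : Matrix.trace A = 0 := by simp [Matrix.trace, Matrix.diag, hz]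
      rw [this] at htr; exact lt_irrefl 0 htr
  set t := Matrix.trace A with ht
  set c := t / frob A A with hc
  have hden : 0 < (d : ℝ) - 1 + ε := by
    have : (1 : ℝ) ≤ d := by exact_mod_cast hd
    linarith
  set M : Matrix (Fin d) (Fin d) ℝ := fun i j => c * A i j - (if i = j then 1 else 0) with hM
  have htA : (∑ i : Fin d, A i i) = t := by rw [ht, Matrix.trace]; rfl
  have hTB : Matrix.trace B = ∑ i : Fin d, ∑ j, (if i = j then (1:ℝ) else 0) * B i j := by
    simp [Matrix.trace, Matrix.diag]
  have hfrobMB : frob M B = c * frob A B - Matrix.trace B := by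
    rw [frob, frob, hTB, Finset.mul_sum, ← Finset.sum_sub_distrib]
    refine Finset.sum_congr rfl fun i _ => ?_
    rw [Finset.mul_sum, ← Finset.sum_sub_distrib]
    refine Finset.sum_congr rfl fun j _ => ?_
    by_cases h : i = j <;> simp [hM, h] <;> ring
  have hfrobMM : frob M M = c ^ 2 * frob A A - 2 * c * t + d := by
    have expand : ∀ i j : Fin d, M i j * M i j =
        c ^ 2 * (A i j * A i j) - 2 * c * ((if i = j then (1:ℝ) else 0) * A i j)
          + (if i = j then (1:ℝ) else 0) := by
      intro i j
      by_cases h : i = j <;> simp [hM, h] <;> ring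
    have e2 : ∀ i : Fin d, (∑ j, (if i = j then (1:ℝ) else 0) * A i j) = A i i := by
      intro i; simp
    have e3 : ∀ i : Fin d, (∑ j, if i = j then (1:ℝ) else 0) = 1 := by
      intro i; simp
    calc frob M M = ∑ i : Fin d, ∑ j, (c ^ 2 * (A i j * A i j)
          - 2 * c * ((if i = j then (1:ℝ) else 0) * A i j) + (if i = j then (1:ℝ) else 0)) := by
          rw [frob]
          exact Finset.sum_congr rfl fun i _ => Finset.sum_congr rfl fun j _ => expand i j
      _ = c ^ 2 * frob A A - 2 * c * t + d := by
          simp only [Finset.sum_add_distrib, Finset.sum_sub_distrib, ← Finset.mul_sum, e2, e3]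
          rw [Finset.sum_const, Finset.card_univ, Fintype.card_fin, htA, frob]
          simp
  have hkey : (d : ℝ) - 1 + ε ≤ t ^ 2 / frob A A := by
    rw [le_div_iff₀ hAA]
    rw [div_le_div_iff₀ (by positivity) hden] at hCordes
    linarith
  have hMM : frob M M ≤ 1 - ε := by
    rw [hfrobMM, hc]
    have heq : (t / frob A A) ^ 2 * frob A A - 2 * (t / frob A A) * t + d
        = (d : ℝ) - t ^ 2 / frob A A := by
      field_simp; ring
    rw [heq]
    linarith
  calc |c * frob A B - Matrix.trace B| = |frob M B| := by rw [hfrobMB]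
    _ ≤ Real.sqrt (frob M M) * Real.sqrt (frob B B) := frob_cs M B
    _ ≤ Real.sqrt (1 - ε) * Real.sqrt (frob B B) :=
        mul_le_mul_of_nonneg_right (Real.sqrt_le_sqrt hMM) (Real.sqrt_nonneg _)
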